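/- Let r < C be positive integers and let G be a connected finite simple undirected graph with at least two vertices, consisting of one vertex of degree C and with every other vertex of degree at most r. Let μ and κ denote respectively the largest and second-largest eigenvalue of the Laplacian L_G (the eigenvalues listed in increasing order with multiplicity). Then κ/μ ≤ (2r+1)/(C+1), and in particular κ/μ ≤ 3r/C. -/

import Mathlib

open Matrix Polynomial
set_option maxHeartbeats 1000000

lemma herm_charpoly {n : ℕ} {A : Matrix (Fin n) (Fin n) ℝ} (hA : A.IsHermitian) :
    A.charpoly = ∏ i, (X - Polynomial.C (hA.eigenvalues i)) := by
  set U : Matrix (Fin n) (Fin n) ℝ := (hA.eigenvectorUnitary : Matrix (Fin n) (Fin n) ℝ) with hUdef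
  set D : Matrix (Fin n) (Fin n) ℝ := Matrix.diagonal (RCLike.ofReal ∘ hA.eigenvalues) with hDdef
  have hU : U * star U = 1 := Matrix.mem_unitaryGroup_iff.mp hA.eigenvectorUnitary.2
  have hU' : star U * U = 1 := Matrix.mem_unitaryGroup_iff'.mp hA.eigenvectorUnitary.2
  have h1 : charmatrix A = U.map Polynomial.C * charmatrix D * (star U).map Polynomial.C := by
    rw [charmatrix, charmatrix, RingHom.mapMatrix_apply, RingHom.mapMatrix_apply,
      hA.spectral_theorem, Unitary.conjStarAlgAut_apply, ← hUdef]
    rw [Matrix.map_mul, Matrix.map_mul, Matrix.mul_sub, Matrix.sub_mul]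
    congr 1
    rw [scalar_apply, ← smul_one_eq_diagonal, Matrix.mul_smul, Matrix.smul_mul, mul_one,
      ← Matrix.map_mul, hU]
    simp [smul_one_eq_diagonal]
  have h2 : A.charpoly = D.charpoly := by
    rw [Matrix.charpoly, Matrix.charpoly, h1, det_mul, det_mul, mul_comm, ← mul_assoc,
      ← det_mul, ← Matrix.map_mul, hU']
    simp
  rw [h2, Matrix.charpoly_of_upperTriangular D (Matrix.blockTriangular_diagonal _)]
  simp [hDdef]

lemma lap_qf_le {M : ℕ} (G : SimpleGraph (Fin M)) [DecidableRel G.Adj] (r : ℕ) (n₀ : Fin M)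
    (hdeg : ∀ i, i ≠ n₀ → G.degree i ≤ r) (x : Fin M → ℝ) (hx0 : x n₀ = 0) :
    x ⬝ᵥ (G.lapMatrix ℝ *ᵥ x) ≤ 2 * r * (x ⬝ᵥ x) := by
  have hq : x ⬝ᵥ (G.lapMatrix ℝ *ᵥ x)
      = (∑ i, ∑ j, if G.Adj i j then (x i - x j)^2 else 0)/2 := by
    rw [← Matrix.toLinearMap₂'_apply', SimpleGraph.lapMatrix_toLinearMap₂']
  have h1 : (∑ i, ∑ j, if G.Adj i j then (x i - x j)^2 else 0)
      ≤ ∑ i, ∑ j, ((if G.Adj i j then 2*(x i)^2 else 0) + (if G.Adj i j then 2*(x j)^2 else 0)) := by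
    refine Finset.sum_le_sum fun i _ => Finset.sum_le_sum fun j _ => ?_
    split_ifs <;> nlinarith [sq_nonneg (x i + x j)]
  have hdsum : ∀ (c : Fin M → ℝ), (∑ i, ∑ j, if G.Adj i j then c i else 0)
      = ∑ i, c i * (G.degree i : ℝ) := by
    intro c
    refine Finset.sum_congr rfl fun i _ => ?_
    rw [SimpleGraph.degree_eq_sum_if_adj, Finset.mul_sum]
    refine Finset.sum_congr rfl fun j _ => ?_
    split_ifs <;> simp
  have h2 : (∑ i, ∑ j, ((if G.Adj i j then 2*(x i)^2 else 0) + (if G.Adj i j then 2*(x j)^2 else 0)))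
      = 4 * ∑ i, (G.degree i : ℝ) * (x i)^2 := by
    simp_rw [Finset.sum_add_distrib]
    have ha : (∑ i, ∑ j, if G.Adj i j then 2*(x i)^2 else 0)
        = ∑ i, (2*(x i)^2) * (G.degree i : ℝ) := hdsum (fun i => 2*(x i)^2)
    have hb : (∑ i, ∑ j, if G.Adj i j then 2*(x j)^2 else 0)
        = ∑ i, (2*(x i)^2) * (G.degree i : ℝ) := by
      rw [Finset.sum_comm]
      rw [← hdsum (fun j => 2*(x j)^2)]
      refine Finset.sum_congr rfl fun j _ => Finset.sum_congr rfl fun i _ => ?_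
      exact if_congr (G.adj_comm i j) rfl rfl
    rw [ha, hb, ← Finset.sum_add_distrib, Finset.mul_sum]
    exact Finset.sum_congr rfl fun i _ => by ring
  have h3 : (∑ i, (G.degree i : ℝ) * (x i)^2) ≤ ∑ i, (r : ℝ) * (x i)^2 := by
    refine Finset.sum_le_sum fun i _ => ?_
    rcases eq_or_ne i n₀ with h | h
    · subst h; rw [hx0]; simp
    · exact mul_le_mul_of_nonneg_right (by exact_mod_cast hdeg i h) (sq_nonneg _)
  have h4 : x ⬝ᵥ x = ∑ i, (x i)^2 := by
    simp [dotProduct, pow_two]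
  rw [hq, h4, Finset.mul_sum, ← Finset.mul_sum] at *
  nlinarith [Finset.mul_sum Finset.univ (fun i => (x i)^2) (r:ℝ)]

lemma rayleigh_le {n : ℕ} {A : Matrix (Fin n) (Fin n) ℝ} (hA : A.IsHermitian) (c : ℝ)
    (h : ∀ i, hA.eigenvalues i ≤ c) (x : Fin n → ℝ) :
    x ⬝ᵥ (A *ᵥ x) ≤ c * (x ⬝ᵥ x) := by
  set U : Matrix (Fin n) (Fin n) ℝ := (hA.eigenvectorUnitary : Matrix (Fin n) (Fin n) ℝ) with hUdef
  have hU : U * star U = 1 := Matrix.mem_unitaryGroup_iff.mp hA.eigenvectorUnitary.2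
  have key : PosSemidef (c • (1 : Matrix (Fin n) (Fin n) ℝ) - A) := by
    have hd : c • (1 : Matrix (Fin n) (Fin n) ℝ) - A
        = U * Matrix.diagonal (fun i => c - hA.eigenvalues i) * (star U) := by
      have : Matrix.diagonal (fun i : Fin n => c - hA.eigenvalues i)
          = c • (1 : Matrix (Fin n) (Fin n) ℝ)
            - Matrix.diagonal (RCLike.ofReal ∘ hA.eigenvalues) := by
        rw [← diagonal_sub, smul_one_eq_diagonal]
        congr 1
      rw [this, Matrix.mul_sub, Matrix.sub_mul]
      have hs : A = U * diagonal (RCLike.ofReal ∘ hA.eigenvalues) * star U := by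
        rw [hUdef]; exact hA.spectral_theorem
      rw [Matrix.mul_smul, Matrix.smul_mul, mul_one, hU, ← hs]
    rw [hd]
    exact (Matrix.posSemidef_diagonal_iff.mpr
      (fun i => by simpa using h i)).mul_mul_conjTranspose_same U
  have := key.dotProduct_mulVec_nonneg x
  rw [star_trivial, Matrix.sub_mulVec, dotProduct_sub, Matrix.smul_mulVec,
    Matrix.one_mulVec, dotProduct_smul] at this
  simp only [smul_eq_mul] at this
  linarith

theorem statement16 {M r C : ℕ} (hr : 0 < r) (hrC : r < C) (hM : 2 ≤ M)
    (G : SimpleGraph (Fin M)) [DecidableRel G.Adj] (hconn : G.Connected)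
    (n₀ : Fin M) (hdeg0 : G.degree n₀ = C)
    (hdeg : ∀ i, i ≠ n₀ → G.degree i ≤ r)
    -- `e` lists the (real) eigenvalues of the Laplacian in increasing order with multiplicity;
    -- `μ = e (M-1)` is the largest and `κ = e (M-2)` the second-largest eigenvalue
    (e : Fin M → ℝ) (hmono : Monotone e)
    (hchar : (G.lapMatrix ℝ).charpoly = ∏ i, (X - Polynomial.C (e i))) :
    e ⟨M - 2, by omega⟩ / e ⟨M - 1, by omega⟩ ≤ (2 * (r : ℝ) + 1) / ((C : ℝ) + 1) ∧
    e ⟨M - 2, by omega⟩ / e ⟨M - 1, by omega⟩ ≤ 3 * (r : ℝ) / (C : ℝ) := by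
  classical
  have hA : (G.lapMatrix ℝ).IsHermitian := (SimpleGraph.posSemidef_lapMatrix ℝ G).1
  set ev : Fin M → ℝ := hA.eigenvalues with hevdef
  -- the multiset of `e`s equals the multiset of eigenvalues
  have hml : Multiset.map e Finset.univ.val = Multiset.map ev Finset.univ.val := by
    have h1 := hchar.symm.trans (herm_charpoly hA)
    have h2 := congrArg Polynomial.roots h1
    rwa [Finset.prod_eq_multiset_prod, Finset.prod_eq_multiset_prod,
      show (Multiset.map (fun i => X - Polynomial.C (e i)) Finset.univ.val)
        = Multiset.map (fun a => X - Polynomial.C a) (Multiset.map e Finset.univ.val) by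
          rw [Multiset.map_map]; rfl,
      show (Multiset.map (fun i => X - Polynomial.C (ev i)) Finset.univ.val)
        = Multiset.map (fun a => X - Polynomial.C a) (Multiset.map ev Finset.univ.val) by
          rw [Multiset.map_map]; rfl,
      Polynomial.roots_multiset_prod_X_sub_C, Polynomial.roots_multiset_prod_X_sub_C] at h2
  have hmax : ∀ i, ev i ≤ e ⟨M - 1, by omega⟩ := by
    intro i
    have hmem : ev i ∈ Multiset.map e Finset.univ.val := by
      rw [hml]; exact Multiset.mem_map_of_mem ev (Finset.mem_univ_val i)
    obtain ⟨j, -, hj⟩ := Multiset.mem_map.mp hmem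
    rw [← hj]
    exact hmono (by rw [Fin.le_def]; simp; omega)
  -- second largest eigenvalue is at most 2r
  have hκ : e ⟨M - 2, by omega⟩ ≤ 2 * r := by
    by_contra hcon
    push_neg at hcon
    have hsub : ({(⟨M - 2, by omega⟩ : Fin M), ⟨M - 1, by omega⟩} : Finset (Fin M))
        ⊆ Finset.univ.filter (fun j => 2 * (r : ℝ) < e j) := by
      intro j hj
      simp only [Finset.mem_insert, Finset.mem_singleton] at hj
      rw [Finset.mem_filter]
      refine ⟨Finset.mem_univ _, ?_⟩
      rcases hj with rfl | rfl
      · exact hcon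
      · exact lt_of_lt_of_le hcon (hmono (by rw [Fin.le_def]; simp; omega))
    have hcard2 : 2 ≤ (Finset.univ.filter (fun j => 2 * (r : ℝ) < e j)).card := by
      refine le_trans (le_of_eq ?_) (Finset.card_le_card hsub)
      rw [Finset.card_pair (by simp [Fin.ext_iff]; omega)]
    have hcnt : ∀ f : Fin M → ℝ, (Finset.univ.filter (fun j => 2 * (r : ℝ) < f j)).card
        = Multiset.countP (fun a => 2 * (r : ℝ) < a) (Multiset.map f Finset.univ.val) := by
      intro f
      rw [Multiset.countP_map]
      rfl
    have hcard2' : 1 < (Finset.univ.filter (fun j => 2 * (r : ℝ) < ev j)).card := by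
      have := hcnt e
      rw [hml, ← hcnt ev] at this
      omega
    obtain ⟨i₁, hi₁, i₂, hi₂, hne⟩ := Finset.one_lt_card.mp hcard2'
    rw [Finset.mem_filter] at hi₁ hi₂
    have hev1 : 2 * (r : ℝ) < ev i₁ := hi₁.2
    have hev2 : 2 * (r : ℝ) < ev i₂ := hi₂.2
    set v₁ : Fin M → ℝ := ⇑(hA.eigenvectorBasis i₁) with hv₁
    set v₂ : Fin M → ℝ := ⇑(hA.eigenvectorBasis i₂) with hv₂
    have horth := hA.eigenvectorBasis.orthonormal
    rw [orthonormal_iff_ite] at horth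
    have hdot : ∀ i j : Fin M, (⇑(hA.eigenvectorBasis i) : Fin M → ℝ) ⬝ᵥ ⇑(hA.eigenvectorBasis j)
        = if i = j then 1 else 0 := by
      intro i j
      have := horth i j
      rw [PiLp.inner_apply] at this
      simpa [dotProduct, mul_comm] using this
    have h11 : v₁ ⬝ᵥ v₁ = 1 := by simpa using hdot i₁ i₁
    have h22 : v₂ ⬝ᵥ v₂ = 1 := by simpa using hdot i₂ i₂
    have h12 : v₁ ⬝ᵥ v₂ = 0 := by simpa [hne] using hdot i₁ i₂
    have h21 : v₂ ⬝ᵥ v₁ = 0 := by simpa [hne.symm] using hdot i₂ i₁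
    obtain ⟨a, b, hab0, hab⟩ : ∃ a b : ℝ, a * v₁ n₀ + b * v₂ n₀ = 0 ∧ 0 < a^2 + b^2 := by
      rcases eq_or_ne (v₁ n₀) 0 with h | h
      · exact ⟨1, 0, by simp [h], by norm_num⟩
      · refine ⟨v₂ n₀, -(v₁ n₀), by ring, ?_⟩
        have h2 : (0:ℝ) < (v₁ n₀)^2 := by positivity
        nlinarith [sq_nonneg (v₂ n₀)]
    set x : Fin M → ℝ := a • v₁ + b • v₂ with hxdef
    have hx0 : x n₀ = 0 := by
      simpa [hxdef] using hab0
    have hxx : x ⬝ᵥ x = a^2 + b^2 := by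
      simp only [hxdef, add_dotProduct, dotProduct_add, smul_dotProduct, dotProduct_smul,
        smul_eq_mul, h11, h12, h21, h22]
      ring
    have e1 : G.lapMatrix ℝ *ᵥ v₁ = ev i₁ • v₁ := hA.mulVec_eigenvectorBasis i₁
    have e2 : G.lapMatrix ℝ *ᵥ v₂ = ev i₂ • v₂ := hA.mulVec_eigenvectorBasis i₂
    have hAx : x ⬝ᵥ (G.lapMatrix ℝ *ᵥ x) = a^2 * ev i₁ + b^2 * ev i₂ := by
      rw [hxdef, Matrix.mulVec_add, Matrix.mulVec_smul, Matrix.mulVec_smul, e1, e2]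
      simp only [add_dotProduct, dotProduct_add, smul_dotProduct, dotProduct_smul,
        smul_eq_mul, h11, h12, h21, h22]
      ring
    have hub := lap_qf_le G r n₀ hdeg x hx0
    rw [hAx, hxx] at hub
    rcases lt_or_ge 0 (a^2) with ha | ha
    · nlinarith [mul_pos ha (sub_pos.mpr hev1), mul_nonneg (sq_nonneg b) (le_of_lt (sub_pos.mpr hev2))]
    · have hb : 0 < b^2 := by nlinarith [sq_nonneg a]
      nlinarith [mul_pos hb (sub_pos.mpr hev2), mul_nonneg (sq_nonneg a) (le_of_lt (sub_pos.mpr hev1))]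
  -- largest eigenvalue is at least C + 1
  have hCpos : (0:ℝ) < C := by
    have : 0 < C := lt_trans hr hrC
    exact_mod_cast this
  set y : Fin M → ℝ := fun i => if i = n₀ then (C:ℝ) else if G.Adj n₀ i then -1 else 0 with hydef
  have hdegC : (G.degree n₀ : ℝ) = C := by rw [hdeg0]
  have hyy : y ⬝ᵥ y = (C:ℝ)^2 + C := by
    rw [dotProduct, ← Finset.add_sum_erase _ _ (Finset.mem_univ n₀)]
    have h1 : y n₀ * y n₀ = (C:ℝ)^2 := by simp [hydef]; ring
    have h2 : (∑ i ∈ Finset.univ.erase n₀, y i * y i) = (C:ℝ) := by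
      have : (∑ i ∈ Finset.univ.erase n₀, y i * y i)
          = ∑ i ∈ Finset.univ.erase n₀, (if G.Adj n₀ i then (1:ℝ) else 0) := by
        refine Finset.sum_congr rfl fun i hi => ?_
        have hi' : i ≠ n₀ := Finset.ne_of_mem_erase hi
        simp only [hydef, hi', if_false]
        split_ifs <;> ring
      rw [this, Finset.sum_erase _ (by simp)]
      rw [← SimpleGraph.degree_eq_sum_if_adj, hdegC]
    rw [h1, h2]
  have hylb : (C:ℝ) * ((C:ℝ)+1)^2 ≤ y ⬝ᵥ (G.lapMatrix ℝ *ᵥ y) := by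
    have hq : y ⬝ᵥ (G.lapMatrix ℝ *ᵥ y)
        = (∑ i, ∑ j, if G.Adj i j then (y i - y j)^2 else 0)/2 := by
      rw [← Matrix.toLinearMap₂'_apply', SimpleGraph.lapMatrix_toLinearMap₂']
    have hgn : (∑ j, if G.Adj n₀ j then (y n₀ - y j)^2 else 0) = (C:ℝ)*((C:ℝ)+1)^2 := by
      have : (∑ j, if G.Adj n₀ j then (y n₀ - y j)^2 else 0)
          = ∑ j, (if G.Adj n₀ j then ((C:ℝ)+1)^2 else 0) := by
        refine Finset.sum_congr rfl fun j _ => ?_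
        split_ifs with h
        · have hj : j ≠ n₀ := (G.ne_of_adj h).symm
          simp only [hydef, hj, if_false, if_pos rfl, if_pos h]
          ring
        · rfl
      rw [this]
      have : (∑ j, if G.Adj n₀ j then ((C:ℝ)+1)^2 else 0)
          = ((C:ℝ)+1)^2 * (G.degree n₀ : ℝ) := by
        rw [SimpleGraph.degree_eq_sum_if_adj, Finset.mul_sum]
        refine Finset.sum_congr rfl fun j _ => ?_
        split_ifs <;> simp
      rw [this, hdegC]; ring
    have hgi : ∀ i, i ≠ n₀ → (if G.Adj i n₀ then ((C:ℝ)+1)^2 else 0)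
        ≤ ∑ j, if G.Adj i j then (y i - y j)^2 else 0 := by
      intro i hi
      have hs := Finset.single_le_sum (f := fun j => if G.Adj i j then (y i - y j)^2 else 0)
        (fun j _ => by positivity) (Finset.mem_univ n₀)
      refine le_trans (le_of_eq ?_) hs
      show (if G.Adj i n₀ then ((C:ℝ)+1)^2 else 0) = if G.Adj i n₀ then (y i - y n₀)^2 else 0
      split_ifs with h
      · have hAdj : G.Adj n₀ i := h.symm
        have hyi : y i = -1 := by simp [hydef, hi, hAdj]
        have hyn : y n₀ = (C:ℝ) := by simp [hydef]
        rw [hyi, hyn]; ring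
      · rfl
    have hsum : 2 * ((C:ℝ)*((C:ℝ)+1)^2) ≤ ∑ i, ∑ j, if G.Adj i j then (y i - y j)^2 else 0 := by
      rw [← Finset.add_sum_erase _ _ (Finset.mem_univ n₀), hgn]
      have h3 : (∑ i ∈ Finset.univ.erase n₀, (if G.Adj i n₀ then ((C:ℝ)+1)^2 else 0))
          = (C:ℝ)*((C:ℝ)+1)^2 := by
        rw [Finset.sum_erase _ (by simp)]
        have : (∑ i, if G.Adj i n₀ then ((C:ℝ)+1)^2 else 0)
            = ∑ i, if G.Adj n₀ i then ((C:ℝ)+1)^2 else 0 :=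
          Finset.sum_congr rfl fun i _ => if_congr (G.adj_comm i n₀) rfl rfl
        rw [this]
        have : (∑ j, if G.Adj n₀ j then ((C:ℝ)+1)^2 else 0)
            = ((C:ℝ)+1)^2 * (G.degree n₀ : ℝ) := by
          rw [SimpleGraph.degree_eq_sum_if_adj, Finset.mul_sum]
          refine Finset.sum_congr rfl fun j _ => ?_
          split_ifs <;> simp
        rw [this, hdegC]; ring
      have h4 : (∑ i ∈ Finset.univ.erase n₀, (if G.Adj i n₀ then ((C:ℝ)+1)^2 else 0))
          ≤ ∑ i ∈ Finset.univ.erase n₀, ∑ j, if G.Adj i j then (y i - y j)^2 else 0 :=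
        Finset.sum_le_sum fun i hi => hgi i (Finset.ne_of_mem_erase hi)
      rw [h3] at h4
      linarith
    rw [hq]
    linarith
  have hmub := rayleigh_le hA (e ⟨M - 1, by omega⟩) hmax y
  have hμ : (C:ℝ) + 1 ≤ e ⟨M - 1, by omega⟩ := by
    rw [hyy] at hmub
    nlinarith [mul_pos hCpos (show (0:ℝ) < (C:ℝ)+1 by linarith)]
  have hμpos : 0 < e ⟨M - 1, by omega⟩ := by linarith
  have hrpos : (0:ℝ) ≤ r := by positivity
  constructor
  · rw [div_le_div_iff₀ hμpos (by linarith : (0:ℝ) < (C:ℝ)+1)]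
    nlinarith [mul_le_mul_of_nonneg_left hμ (show (0:ℝ) ≤ 2*r+1 by linarith),
      mul_le_mul_of_nonneg_right hκ (show (0:ℝ) ≤ (C:ℝ)+1 by linarith)]
  · rw [div_le_div_iff₀ hμpos hCpos]
    have hrC' : (r:ℝ) ≤ C := by exact_mod_cast le_of_lt hrC
    nlinarith [mul_le_mul_of_nonneg_left hμ (show (0:ℝ) ≤ 3*r by linarith),
      mul_le_mul_of_nonneg_right hκ (show (0:ℝ) ≤ (C:ℝ) by linarith)]
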